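/- arXiv:math/0506193 — 2 statements merged into one kernel-verified Lean document; each statement's English description precedes it below -/
import Mathlib

section
/- Let B(K_n) be the braid group whose Coxeter graph is the complete graph on n vertices: generators a_1,…,a_n with relations a_i a_j a_i = a_j a_i a_j for all i ≠ j. Let B(A_n) be the Artin braid group with generators σ_1,…,σ_n. Then the map a_i ↦ c_i, where c_n := σ_n and c_k := σ_k^{-1} c_{k+1} σ_k, extends to a group homomorphism η : B(K_n) → B(A_n). -/
/-- The braid relations of type `A_n` on generators `σ_1, …, σ_n`
(encoded with `0`-based indices `0, …, n-1`). -/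
def braidRelsA (n : ℕ) : Set (FreeGroup (Fin n)) :=
  {r | (∃ i j : Fin n, (i : ℕ) + 1 = (j : ℕ) ∧
        r = .of i * .of j * .of i * (.of j * .of i * .of j)⁻¹) ∨
      (∃ i j : Fin n, (i : ℕ) + 1 < (j : ℕ) ∧
        r = .of i * .of j * (.of j * .of i)⁻¹)}

/-- The Artin braid group `B(A_n)` with generators `σ_1, …, σ_n`. -/
abbrev BraidA (n : ℕ) := PresentedGroup (braidRelsA n)

/-- The generator `σ_{k+1}` of `B(A_n)` (`0`-based index `k`). -/
def σA {n : ℕ} (k : ℕ) : BraidA n :=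
  if h : k < n then PresentedGroup.of ⟨k, h⟩ else 1

/-- The elements `c_k` (`0`-based: `cA n k` is `c_{k+1}` of the paper):
`c_n := σ_n` and `c_k := σ_k⁻¹ * c_{k+1} * σ_k`. -/
def cA (n : ℕ) (k : ℕ) : BraidA n :=
  if _h : k + 1 < n then (σA k)⁻¹ * cA n (k + 1) * σA k
  else if _h2 : k < n then σA k else 1
  termination_by n - k
  decreasing_by omega

/-- The relations of the braid group `B(K_n)` whose Coxeter graph is the
complete graph on `n` vertices: `a_i a_j a_i = a_j a_i a_j` for all `i ≠ j`. -/
def braidRelsK (n : ℕ) : Set (FreeGroup (Fin n)) :=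
  {r | ∃ i j : Fin n, i ≠ j ∧
        r = .of i * .of j * .of i * (.of j * .of i * .of j)⁻¹}

/-- The braid group `B(K_n)` of the complete graph on `n` vertices. -/
abbrev BraidK (n : ℕ) := PresentedGroup (braidRelsK n)

/-- The generator `a_{k+1}` of `B(K_n)` (`0`-based index `k`). -/
def aK {n : ℕ} (k : ℕ) : BraidK n :=
  if h : k < n then PresentedGroup.of ⟨k, h⟩ else 1

/-! Every `c_k` is a conjugate of `σ_n`. The braid relation `x y x = y x y` is preserved by
conjugation, and conjugating by an element that commutes with `y` fixes `y`; so, by downward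
induction on the indices, `σ_k` braids with `c_{k+1}`, `σ_k` commutes with `c_l` for `l > k + 1`,
and hence `c_i` braids with `c_j` whenever `i ≠ j`. -/

def BraidRel {G : Type*} [Mul G] (x y : G) : Prop :=
  x * y * x = y * x * y

namespace BraidRel

variable {G : Type*} [Group G] {g x y z : G}

theorem symm (h : BraidRel x y) : BraidRel y x :=
  Eq.symm h

theorem conj (g : G) (h : BraidRel x y) : BraidRel (g * x * g⁻¹) (g * y * g⁻¹) := by
  unfold BraidRel at h ⊢
  calc g * x * g⁻¹ * (g * y * g⁻¹) * (g * x * g⁻¹) = g * (x * y * x) * g⁻¹ := by group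
    _ = g * (y * x * y) * g⁻¹ := by rw [h]
    _ = g * y * g⁻¹ * (g * x * g⁻¹) * (g * y * g⁻¹) := by group

theorem mul_mul_inv_eq (h : BraidRel x y) : y * x * y⁻¹ = x⁻¹ * y * x := by
  unfold BraidRel at h
  calc y * x * y⁻¹ = x⁻¹ * (x * y * x) * y⁻¹ := by group
    _ = x⁻¹ * (y * x * y) * y⁻¹ := by rw [h]
    _ = x⁻¹ * y * x := by group

theorem inv_conj_of_commute (hgz : Commute g z) (h : BraidRel y z) :
    BraidRel (g⁻¹ * y * g) z := by
  have hz : g⁻¹ * z * g = z := by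
    rw [mul_assoc, ← hgz.eq, inv_mul_cancel_left]
  have := h.conj g⁻¹
  rwa [inv_inv, hz] at this

theorem inv_conj_left (h : BraidRel x y) : BraidRel (x⁻¹ * y * x) y := by
  simpa only [h.mul_mul_inv_eq, mul_inv_cancel_right] using h.conj y

theorem inv_conj_right_of_commute (hxz : Commute x z) (hxy : BraidRel x y)
    (hyz : BraidRel y z) : BraidRel x (y⁻¹ * z * y) := by
  have h := hyz.inv_conj_of_commute hxz
  rw [← hxy.mul_mul_inv_eq] at h
  have hx : y⁻¹ * (y * x * y⁻¹) * y⁻¹⁻¹ = x := by group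
  have := h.conj y⁻¹
  rwa [hx, inv_inv] at this

end BraidRel

theorem FreeGroup.lift_braid_rel_eq_one_iff {α G : Type*} [Group G] (f : α → G) (i j : α) :
    FreeGroup.lift f (.of i * .of j * .of i * (.of j * .of i * .of j)⁻¹) = 1 ↔
      BraidRel (f i) (f j) := by
  simp only [_root_.map_mul, _root_.map_inv, lift_apply_of, mul_inv_eq_one, BraidRel]

section BraidA

variable {n : ℕ}

theorem σA_braidRel {k : ℕ} (h : k + 1 < n) : BraidRel (σA (n := n) k) (σA (k + 1)) := by
  have hrel := PresentedGroup.one_of_mem (rels := braidRelsA n)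
    (Or.inl ⟨⟨k, by omega⟩, ⟨k + 1, h⟩, rfl, rfl⟩)
  rw [σA, σA, dif_pos (by omega : k < n), dif_pos h]
  rw [map_mul, map_inv, mul_inv_eq_one] at hrel
  exact hrel

theorem σA_commute {k l : ℕ} (h : k + 1 < l) : Commute (σA (n := n) k) (σA l) := by
  unfold σA
  split_ifs with hk hl
  · have hrel := PresentedGroup.one_of_mem (rels := braidRelsA n)
      (Or.inr ⟨⟨k, hk⟩, ⟨l, hl⟩, h, rfl⟩)
    rw [map_mul, map_inv, mul_inv_eq_one] at hrel
    exact hrel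
  all_goals simp

theorem cA_of_succ_lt {k : ℕ} (h : k + 1 < n) : cA n k = (σA k)⁻¹ * cA n (k + 1) * σA k := by
  rw [cA, dif_pos h]

theorem cA_of_succ_eq {k : ℕ} (h : k + 1 = n) : cA n k = σA k := by
  rw [cA, dif_neg (by omega), dif_pos (by omega)]

theorem cA_of_le {k : ℕ} (h : n ≤ k) : cA n k = 1 := by
  rw [cA, dif_neg (by omega), dif_neg (by omega)]

theorem σA_commute_cA {k l : ℕ} (h : k + 1 < l) : Commute (σA (n := n) k) (cA n l) := by
  rcases lt_trichotomy (l + 1) n with hl | hl | hl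
  · rw [cA_of_succ_lt hl]
    exact ((σA_commute h).inv_right.mul_right (σA_commute_cA (by omega))).mul_right
      (σA_commute h)
  · rw [cA_of_succ_eq hl]
    exact σA_commute h
  · rw [cA_of_le (by omega)]
    exact Commute.one_right _
termination_by n - l

theorem σA_braidRel_cA {k : ℕ} (h : k + 1 < n) : BraidRel (σA (n := n) k) (cA n (k + 1)) := by
  rcases lt_or_eq_of_le (show k + 2 ≤ n by omega) with hk | hk
  · rw [cA_of_succ_lt hk]
    exact BraidRel.inv_conj_right_of_commute (σA_commute_cA (by omega)) (σA_braidRel h)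
      (σA_braidRel_cA hk)
  · rw [cA_of_succ_eq hk]
    exact σA_braidRel h
termination_by n - k

theorem cA_braidRel {i j : ℕ} (hij : i < j) (hj : j < n) : BraidRel (cA n i) (cA n j) := by
  have hi : i + 1 < n := by omega
  rw [cA_of_succ_lt hi]
  rcases lt_or_eq_of_le (show i + 1 ≤ j by omega) with hlt | rfl
  · exact (cA_braidRel hlt hj).inv_conj_of_commute (σA_commute_cA hlt)
  · exact (σA_braidRel_cA hi).inv_conj_left
termination_by j - i

end BraidA

/-- The map `a_i ↦ c_i` extends to a group homomorphism
`η : B(K_n) → B(A_n)`. -/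
theorem exists_eta (n : ℕ) :
    ∃ η : BraidK n →* BraidA n, ∀ i : Fin n, η (aK (i : ℕ)) = cA n (i : ℕ) := by
  have hrels : ∀ r ∈ braidRelsK n, FreeGroup.lift (fun i : Fin n => cA n i) r = 1 := by
    rintro r ⟨i, j, hij, rfl⟩
    rw [FreeGroup.lift_braid_rel_eq_one_iff]
    rcases Fin.lt_or_lt_of_ne hij with h | h
    · exact cA_braidRel h j.isLt
    · exact (cA_braidRel h i.isLt).symm
  refine ⟨PresentedGroup.toGroup hrels, fun i => ?_⟩
  rw [aK, dif_pos i.isLt]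
  exact PresentedGroup.toGroup.of hrels
end

section
/- In the Artin braid group B(A_n), the elements σ_{n-1} and σ_n² satisfy the B₂-type relation: σ_{n-1} σ_n² σ_{n-1} σ_n² = σ_n² σ_{n-1} σ_n² σ_{n-1}. -/
theorem braid_sq_relation {M : Type*} [Monoid M] {a b : M} (h : a * b * a = b * a * b) :
    a * b ^ 2 * a * b ^ 2 = b ^ 2 * a * b ^ 2 * a := by
  calc a * b ^ 2 * a * b ^ 2 = a * b * (b * a * b) * b := by simp only [sq, mul_assoc]
    _ = a * b * (a * b * a) * b := by rw [h]
    _ = (a * b * a) * (b * a * b) := by simp only [mul_assoc]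
    _ = (b * a * b) * (a * b * a) := by rw [h]
    _ = b * (a * b * a) * (b * a) := by simp only [mul_assoc]
    _ = b * (b * a * b) * (b * a) := by rw [h]
    _ = b ^ 2 * a * b ^ 2 * a := by simp only [sq, mul_assoc]

theorem σA_braid {n k : ℕ} (hk : k + 1 < n) :
    σA (n := n) k * σA (k + 1) * σA k = σA (k + 1) * σA k * σA (k + 1) := by
  rw [σA, σA, dif_pos (by omega), dif_pos hk]
  simp only [PresentedGroup.of, ← map_mul]
  exact PresentedGroup.mk_eq_mk_of_mul_inv_mem (Or.inl ⟨⟨k, by omega⟩, ⟨k + 1, hk⟩, rfl, rfl⟩)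

/-- In the Artin braid group `B(A_n)` (`n ≥ 2`), the elements `σ_{n-1}` and
`σ_n²` satisfy the `B₂`-type relation
`σ_{n-1} σ_n² σ_{n-1} σ_n² = σ_n² σ_{n-1} σ_n² σ_{n-1}`
(`0`-based: `σ_{n-1} = σA (n-2)` and `σ_n = σA (n-1)`). -/
theorem σA_B2_relation (n : ℕ) (hn : 2 ≤ n) :
    σA (n := n) (n - 2) * (σA (n := n) (n - 1)) ^ 2 * σA (n := n) (n - 2) *
        (σA (n := n) (n - 1)) ^ 2
      = (σA (n := n) (n - 1)) ^ 2 * σA (n := n) (n - 2) *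
        (σA (n := n) (n - 1)) ^ 2 * σA (n := n) (n - 2) := by
  obtain ⟨k, rfl⟩ : ∃ k, n = k + 2 := ⟨n - 2, by omega⟩
  exact braid_sq_relation (σA_braid (by omega))
end
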